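/- Monotone decrease of ECE under the mean-matching constraint in a symmetric model: suppose the true conditional probability satisfies P(y=1 | ŵᵀx = ξ) = g(ξ) where g : R → (0,1) is strictly increasing with g(−ξ) = 1 − g(ξ), and (ŵᵀx) ~ N(0, q). Then the rescaled predictor ξ ↦ σ(ξ/T) is perfectly calibrated (Δ_ℓ = 0 for all ℓ) if and only if σ(ξ/T) = g(ξ) for a.e. ξ, and when such T exists the expectation consistency condition E[max(σ(ξ/T), 1−σ(ξ/T))] = accuracy is satisfied at that T. -/

import Mathlib

open MeasureTheory ProbabilityTheory

/-- The logistic sigmoid. -/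
noncomputable def sigmoid (t : ℝ) : ℝ := 1 / (1 + Real.exp (-t))

open Set

/- Both claims reduce to the pointwise identity `σ(ξ/T) = g ξ`. Calibration is that identity
read through the bijection `ℓ ↦ T log(ℓ/(1-ℓ))` between `(0,1)` and `ℝ`, the inverse of
`ξ ↦ σ(ξ/T)`. A.e. equality upgrades to it because the equality set is dense and a monotone
function is squeezed at every point between values of the continuous `σ(·/T)` from the left and
from the right. Once the two predictors agree, so do their mean confidences. -/

theorem Monotone.eq_of_ae_eq_of_continuous {α β : Type*} [TopologicalSpace α] [LinearOrder α]
    [OrderTopology α] [DenselyOrdered α] [NoMaxOrder α] [NoMinOrder α] [MeasurableSpace α]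
    {μ : Measure α} [μ.IsOpenPosMeasure] [TopologicalSpace β] [LinearOrder β]
    [OrderClosedTopology β] {f g : α → β} (hg : Monotone g) (hf : Continuous f)
    (hfg : f =ᵐ[μ] g) : f = g := by
  have hdense : Dense {x | f x = g x} := Measure.dense_of_ae hfg
  have mem_closure_of_isOpen {x : α} {s : Set α} (hs : IsOpen s) (hx : x ∈ closure s) :
      x ∈ closure (s ∩ {x | f x = g x}) :=
    closure_minimal (hdense.open_subset_closure_inter hs) isClosed_closure hx
  funext ξ
  apply le_antisymm
  · have hξ := mem_closure_of_isOpen (x := ξ) (isOpen_Iio (a := ξ)) (by simp)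
    refine (isClosed_le hf continuous_const).closure_subset_iff.2 ?_ hξ
    rintro x ⟨hxξ, hx⟩
    exact hx.trans_le (hg hxξ.le)
  · have hξ := mem_closure_of_isOpen (x := ξ) (isOpen_Ioi (a := ξ)) (by simp)
    refine (isClosed_le continuous_const hf).closure_subset_iff.2 ?_ hξ
    rintro x ⟨hξx, hx⟩
    exact (hg hξx.le).trans_eq hx.symm

theorem sigmoid_eq_real_sigmoid : sigmoid = Real.sigmoid :=
  funext fun _ ↦ one_div _

theorem Real.sigmoid_log_div_one_sub {ℓ : ℝ} (hℓ : ℓ ∈ Ioo 0 1) :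
    Real.sigmoid (Real.log (ℓ / (1 - ℓ))) = ℓ := by
  obtain ⟨h0, h1⟩ := hℓ
  rw [Real.sigmoid_def, Real.exp_neg, Real.exp_log (div_pos h0 (sub_pos.2 h1))]
  field_simp
  ring

theorem Real.log_sigmoid_div_one_sub (t : ℝ) :
    Real.log (Real.sigmoid t / (1 - Real.sigmoid t)) = t :=
  Real.sigmoid_injective <|
    Real.sigmoid_log_div_one_sub ⟨Real.sigmoid_pos t, Real.sigmoid_lt_one t⟩

theorem calibrated_iff_forall_sigmoid_div_eq (g : ℝ → ℝ) {T : ℝ} (hT : T ≠ 0) :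
    (∀ ℓ ∈ Ioo (0:ℝ) 1, ℓ - g (T * Real.log (ℓ / (1 - ℓ))) = 0) ↔
      ∀ ξ, sigmoid (ξ / T) = g ξ := by
  rw [sigmoid_eq_real_sigmoid]
  constructor
  · intro hcal ξ
    have h := hcal _ ⟨Real.sigmoid_pos (ξ / T), Real.sigmoid_lt_one (ξ / T)⟩
    rwa [Real.log_sigmoid_div_one_sub, mul_div_cancel₀ _ hT, sub_eq_zero] at h
  · intro hpt ℓ hℓ
    have h := hpt (T * Real.log (ℓ / (1 - ℓ)))
    rw [mul_div_cancel_left₀ _ hT, Real.sigmoid_log_div_one_sub hℓ] at h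
    exact sub_eq_zero.2 h

theorem stmt15_general (g : ℝ → ℝ) (hg : StrictMono g)
    (q : ℝ) (T : ℝ) (hT : 0 < T) :
    ((∀ ℓ ∈ Set.Ioo (0:ℝ) 1, ℓ - g (T * Real.log (ℓ / (1 - ℓ))) = 0) ↔
        ∀ᵐ ξ ∂(volume : Measure ℝ), sigmoid (ξ / T) = g ξ) ∧
    ((∀ ℓ ∈ Set.Ioo (0:ℝ) 1, ℓ - g (T * Real.log (ℓ / (1 - ℓ))) = 0) →
      ∫ ξ, max (sigmoid (ξ / T)) (1 - sigmoid (ξ / T)) ∂gaussianReal 0 q.toNNReal =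
        ∫ ξ, max (g ξ) (1 - g ξ) ∂gaussianReal 0 q.toNNReal) := by
  have hcal := calibrated_iff_forall_sigmoid_div_eq g hT.ne'
  have hcont : Continuous fun ξ ↦ sigmoid (ξ / T) := by
    rw [sigmoid_eq_real_sigmoid]
    fun_prop
  have hae : (∀ᵐ ξ ∂(volume : Measure ℝ), sigmoid (ξ / T) = g ξ) ↔ ∀ ξ, sigmoid (ξ / T) = g ξ :=
    ⟨fun h ↦ congrFun (hg.monotone.eq_of_ae_eq_of_continuous hcont h), ae_of_all _⟩
  refine ⟨hcal.trans hae.symm, fun h ↦ ?_⟩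
  simp_rw [hcal.1 h]

/-- In a symmetric model where `P(y=1 | ŵᵀx = ξ) = g(ξ)` with `g` strictly
increasing, `g(−ξ) = 1 − g(ξ)`, values in `(0,1)`, and `ŵᵀx ~ N(0,q)`:
the `T`-rescaled predictor `ξ ↦ σ(ξ/T)` is perfectly calibrated
(`Δ_ℓ = ℓ − g(T σ⁻¹(ℓ)) = 0` for all `ℓ ∈ (0,1)`) if and only if
`σ(ξ/T) = g(ξ)` for a.e. `ξ`; and when such `T` exists, the expectation
consistency condition (average confidence = accuracy
`E_{ξ~N(0,q)}[max(g(ξ), 1−g(ξ))]`) holds at that `T`. -/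
theorem stmt15 (g : ℝ → ℝ) (hg : StrictMono g) (hg01 : ∀ ξ, g ξ ∈ Set.Ioo (0:ℝ) 1)
    (hsym : ∀ ξ, g (-ξ) = 1 - g ξ) (q : ℝ) (hq : 0 < q) (T : ℝ) (hT : 0 < T) :
    ((∀ ℓ ∈ Set.Ioo (0:ℝ) 1, ℓ - g (T * Real.log (ℓ / (1 - ℓ))) = 0) ↔
        ∀ᵐ ξ ∂(volume : Measure ℝ), sigmoid (ξ / T) = g ξ) ∧
    ((∀ ℓ ∈ Set.Ioo (0:ℝ) 1, ℓ - g (T * Real.log (ℓ / (1 - ℓ))) = 0) →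
      ∫ ξ, max (sigmoid (ξ / T)) (1 - sigmoid (ξ / T)) ∂gaussianReal 0 q.toNNReal =
        ∫ ξ, max (g ξ) (1 - g ξ) ∂gaussianReal 0 q.toNNReal) :=
  stmt15_general g hg q T hT
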